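/- arXiv:1012.4514 — 5 statements merged into one kernel-verified Lean document; each statement's English description precedes it below -/
import Mathlib

section
/- Let T be a contraction on a finite-dimensional Hilbert space H (‖T‖ ≤ 1), and let D_T = (I - T*T)^{1/2} and D_{T*} = (I - TT*)^{1/2}. Then the 2×2 block operator U = [[T, D_{T*}], [D_T, -T*]] on H ⊕ H is unitary, and P_H U P_H = T (i.e., the (1,1) block of U is T). -/
open ContinuousLinearMap

/-!
Everything rests on the intertwining relation `T D_T = D_{T*} T`. Since
`T (1 - T*T) = (1 - TT*) T`, the operator `T` intertwines every polynomial in `1 - T*T` with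
the same polynomial in `1 - TT*`; in finite dimension the spectra are finite, so the square
root agrees on them with an interpolating polynomial, and `D_T`, `D_{T*}` are these square roots
by uniqueness of positive square roots. With the intertwining relation and its adjoint, both
`U* U` and `U U*` multiply out blockwise to the identity.
-/

open Polynomial in
theorem SemiconjBy.aeval {R A : Type*} [CommSemiring R] [Semiring A] [Algebra R A]
    {x a b : A} (h : SemiconjBy x a b) (p : R[X]) :
    SemiconjBy x (aeval a p) (aeval b p) := by
  induction p using Polynomial.induction_on' with
  | add p q hp hq => simpa only [map_add] using hp.add_right hq
  | monomial n c =>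
    simp only [aeval_monomial]
    exact (Algebra.commute_algebraMap_right c x).semiconjBy.mul_right (h.pow_right n)

section FiniteSpectrum

variable {R A : Type*} {p : A → Prop} [Field R] [StarRing R] [MetricSpace R]
  [IsTopologicalSemiring R] [ContinuousStar R] [TopologicalSpace A] [Ring A] [StarRing A]
  [Algebra R A] [ContinuousFunctionalCalculus R A p]

open Polynomial in
theorem exists_cfc_eq_aeval_of_spectrum_subset (f : R → R) {s : Set R} (hs : s.Finite) :
    ∃ q : R[X], ∀ a : A, spectrum R a ⊆ s → p a → cfc f a = aeval a q := by
  classical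
  refine ⟨Lagrange.interpolate hs.toFinset id f, fun a has ha => ?_⟩
  rw [← cfc_polynomial _ a]
  refine cfc_congr fun x hx => ?_
  exact (Lagrange.eval_interpolate_at_node f Function.injective_id.injOn
    (hs.mem_toFinset.mpr (has hx))).symm

theorem SemiconjBy.cfc_of_finite_spectrum {x a b : A} (h : SemiconjBy x a b)
    (ha_fin : (spectrum R a).Finite) (hb_fin : (spectrum R b).Finite) (f : R → R)
    (ha : p a := by cfc_tac) (hb : p b := by cfc_tac) :
    SemiconjBy x (cfc f a) (cfc f b) := by
  obtain ⟨q, hq⟩ := exists_cfc_eq_aeval_of_spectrum_subset (A := A) f (ha_fin.union hb_fin)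
  rw [hq a Set.subset_union_left ha, hq b Set.subset_union_right hb]
  exact h.aeval q

end FiniteSpectrum

theorem cfc_sqrt_mul_self {A : Type*} [CStarAlgebra A] [PartialOrder A] [StarOrderedRing A]
    {a : A} (ha : 0 ≤ a) : cfc Real.sqrt (a * a) = a := by
  have ha_sq : 0 ≤ a * a := by
    simpa only [ha.isSelfAdjoint.star_eq] using star_mul_self_nonneg a
  rw [← cfcₙ_eq_cfc, ← CFC.sqrt_eq_real_sqrt _ ha_sq, CFC.sqrt_mul_self a]

namespace ContinuousLinearMap

theorem finite_spectrum_real {E : Type*} [NormedAddCommGroup E] [NormedSpace ℂ E]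
    [FiniteDimensional ℂ E] (f : E →L[ℂ] E) : (spectrum ℝ f).Finite := by
  rw [← spectrum.preimage_algebraMap ℂ, spectrum_eq]
  exact (Module.End.finite_spectrum _).preimage (FaithfulSMul.algebraMap_injective ℝ ℂ).injOn

theorem mul_defect_eq_defect_mul {H : Type*} [NormedAddCommGroup H] [InnerProductSpace ℂ H]
    [FiniteDimensional ℂ H] {T D D' : H →L[ℂ] H}
    (hD_pos : D.IsPositive) (hD_sq : D * D = 1 - adjoint T * T)
    (hD'_pos : D'.IsPositive) (hD'_sq : D' * D' = 1 - T * adjoint T) :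
    T * D = D' * T := by
  have h : SemiconjBy T (D * D) (D' * D') := by
    rw [hD_sq, hD'_sq, SemiconjBy]
    noncomm_ring
  have h_sqrt := h.cfc_of_finite_spectrum (finite_spectrum_real _) (finite_spectrum_real _)
    Real.sqrt (by simpa only [hD_pos.isSelfAdjoint.star_eq] using IsSelfAdjoint.star_mul_self D)
    (by simpa only [hD'_pos.isSelfAdjoint.star_eq] using IsSelfAdjoint.star_mul_self D')
  rwa [cfc_sqrt_mul_self ((nonneg_iff_isPositive D).mpr hD_pos),
    cfc_sqrt_mul_self ((nonneg_iff_isPositive D').mpr hD'_pos)] at h_sqrt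

variable {𝕜 E F : Type*} [RCLike 𝕜] [NormedAddCommGroup E] [InnerProductSpace 𝕜 E]
  [NormedAddCommGroup F] [InnerProductSpace 𝕜 F]
  (A : E →L[𝕜] E) (B : F →L[𝕜] E) (C : E →L[𝕜] F) (D : F →L[𝕜] F)

noncomputable def fromBlocks : WithLp 2 (E × F) →L[𝕜] WithLp 2 (E × F) :=
  ((WithLp.prodContinuousLinearEquiv 2 𝕜 E F).symm : E × F →L[𝕜] WithLp 2 (E × F)) ∘L
    (A.coprod B).prod (C.coprod D) ∘L (WithLp.prodContinuousLinearEquiv 2 𝕜 E F : _ →L[𝕜] E × F)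

@[simp]
theorem fromBlocks_apply_fst (x : WithLp 2 (E × F)) :
    (fromBlocks A B C D x).fst = A x.fst + B x.snd :=
  rfl

@[simp]
theorem fromBlocks_apply_snd (x : WithLp 2 (E × F)) :
    (fromBlocks A B C D x).snd = C x.fst + D x.snd :=
  rfl

theorem fromBlocks_one : fromBlocks (1 : E →L[𝕜] E) 0 0 (1 : F →L[𝕜] F) = 1 :=
  ext fun x => WithLp.ofLp_injective 2 (Prod.ext (by simp) (by simp))

theorem fromBlocks_mul_fromBlocks (A' : E →L[𝕜] E) (B' : F →L[𝕜] E) (C' : E →L[𝕜] F)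
    (D' : F →L[𝕜] F) :
    fromBlocks A B C D * fromBlocks A' B' C' D' =
      fromBlocks (A ∘L A' + B ∘L C') (A ∘L B' + B ∘L D') (C ∘L A' + D ∘L C')
        (C ∘L B' + D ∘L D') := by
  refine ext fun x => WithLp.ofLp_injective 2 (Prod.ext ?_ ?_) <;>
  · simp only [mul_apply_eq_comp, WithLp.ofLp_fst, WithLp.ofLp_snd, fromBlocks_apply_fst,
      fromBlocks_apply_snd, map_add, add_apply, comp_apply]
    abel

theorem adjoint_fromBlocks [CompleteSpace E] [CompleteSpace F] :
    adjoint (fromBlocks A B C D) = fromBlocks (adjoint A) (adjoint C) (adjoint B) (adjoint D) := by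
  refine ((eq_adjoint_iff _ _).mpr fun x y => ?_).symm
  simp only [WithLp.prod_inner_apply, WithLp.ofLp_fst, WithLp.ofLp_snd, fromBlocks_apply_fst,
    fromBlocks_apply_snd, inner_add_left, inner_add_right, adjoint_inner_left]
  ring

end ContinuousLinearMap

theorem halmos_one_dilation_general
    (H : Type) [NormedAddCommGroup H] [InnerProductSpace ℂ H] [FiniteDimensional ℂ H]
    (T D D' : H →L[ℂ] H)
    (hD_pos : D.IsPositive) (hD_sq : D * D = 1 - adjoint T * T)
    (hD'_pos : D'.IsPositive) (hD'_sq : D' * D' = 1 - T * adjoint T) :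
    ∃ U : WithLp 2 (H × H) →L[ℂ] WithLp 2 (H × H),
      (∀ x : WithLp 2 (H × H),
        WithLp.equiv 2 (H × H) (U x) =
          (T (WithLp.equiv 2 (H × H) x).1 + D' (WithLp.equiv 2 (H × H) x).2,
           D (WithLp.equiv 2 (H × H) x).1 - adjoint T (WithLp.equiv 2 (H × H) x).2)) ∧
      U ∈ unitary (WithLp 2 (H × H) →L[ℂ] WithLp 2 (H × H)) ∧
      (∀ h : H,
        (WithLp.equiv 2 (H × H) (U ((WithLp.equiv 2 (H × H)).symm (h, 0)))).1 = T h) := by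
  have hTD : T * D = D' * T := mul_defect_eq_defect_mul hD_pos hD_sq hD'_pos hD'_sq
  have hDT : D * adjoint T = adjoint T * D' := by
    simpa only [star_mul, hD_pos.isSelfAdjoint.star_eq, hD'_pos.isSelfAdjoint.star_eq,
      star_eq_adjoint] using congrArg star hTD
  refine ⟨fromBlocks T D' D (-adjoint T), fun x => by ext <;> simp [sub_eq_add_neg], ?_,
    fun h => by simp⟩
  rw [Unitary.mem_iff, star_eq_adjoint, adjoint_fromBlocks, fromBlocks_mul_fromBlocks,
    fromBlocks_mul_fromBlocks, ← fromBlocks_one]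
  constructor <;> congr 1 <;>
    simp only [hD_pos.isSelfAdjoint.adjoint_eq, hD'_pos.isSelfAdjoint.adjoint_eq, map_neg,
      adjoint_adjoint, ← mul_def, mul_neg, neg_mul, hD_sq, hD'_sq, hTD, hDT] <;>
    abel

/-- **Halmos unitary 1-dilation.** If `T` is a contraction on a finite-dimensional complex
Hilbert space `H`, and `D = (I - T*T)^{1/2}`, `D' = (I - TT*)^{1/2}` (characterized as the
positive square roots), then the block operator `U = [[T, D'], [D, -T*]]` on `H ⊕ H`
(with the ℓ²-product inner product) is unitary, and its `(1,1)` block is `T`,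
i.e. `P_H U P_H = T`. -/
theorem halmos_one_dilation
    (H : Type) [NormedAddCommGroup H] [InnerProductSpace ℂ H] [FiniteDimensional ℂ H]
    (T D D' : H →L[ℂ] H) (hT : ‖T‖ ≤ 1)
    (hD_pos : D.IsPositive) (hD_sq : D * D = 1 - adjoint T * T)
    (hD'_pos : D'.IsPositive) (hD'_sq : D' * D' = 1 - T * adjoint T) :
    ∃ U : WithLp 2 (H × H) →L[ℂ] WithLp 2 (H × H),
      (∀ x : WithLp 2 (H × H),
        WithLp.equiv 2 (H × H) (U x) =
          (T (WithLp.equiv 2 (H × H) x).1 + D' (WithLp.equiv 2 (H × H) x).2,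
           D (WithLp.equiv 2 (H × H) x).1 - adjoint T (WithLp.equiv 2 (H × H) x).2)) ∧
      U ∈ unitary (WithLp 2 (H × H) →L[ℂ] WithLp 2 (H × H)) ∧
      (∀ h : H,
        (WithLp.equiv 2 (H × H) (U ((WithLp.equiv 2 (H × H)).symm (h, 0)))).1 = T h) :=
  halmos_one_dilation_general H T D D' hD_pos hD_sq hD'_pos hD'_sq
end

section
/- If T acts on an n-dimensional Hilbert space H, the minimal dimension of a space on which a unitary N-dilation of T can act is n + N·d_T, where d_T = rank(I - T*T). Moreover, a unitary N-dilation is N-minimal if and only if it acts on a space of dimension exactly n + N·d_T. -/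
/-!
For a unitary `N`-dilation `(W, U)` of `T`, let `Z = U W - W T` be its wandering map. The
compression identities `W* U^k W = T^k` give `Z* Z = 1 - T* T`, so `rank Z = d_T`, and they make
the subspaces `W H, Z H, U Z H, …, U^(N-1) Z H` mutually orthogonal. As
`U^(m+1) W h = U^m W T h + U^m Z h`, these subspaces span `span {U^k W h : k ≤ N}`, whose dimension
is therefore `n + N d_T` for every dilation; this gives both the lower bound and the
characterisation of `N`-minimality.

Conversely, on `H ⊕ E^N` with `E = range D_T`, the shift
`J (h, e₀, …, e_(N-1)) = (T h, D_T h, e₀, …, e_(N-2))` is isometric on the subspace where the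
discarded entry vanishes, and `J^k (h, 0)` lies in that subspace for `k < N`. Hence any unitary
extension of `J` is an `N`-dilation of `T` on a space of dimension `n + N d_T`.
-/

open ContinuousLinearMap WithLp
open scoped InnerProductSpace

section General

variable {𝕜 E F : Type*} [RCLike 𝕜] [NormedAddCommGroup E] [InnerProductSpace 𝕜 E]
  [NormedAddCommGroup F] [InnerProductSpace 𝕜 F]

theorem ContinuousLinearMap.finrank_range_adjoint_comp_self [FiniteDimensional 𝕜 E]
    [CompleteSpace E] [CompleteSpace F] (A : E →L[𝕜] F) :
    Module.finrank 𝕜 (LinearMap.range (adjoint A ∘L A).toLinearMap) =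
      Module.finrank 𝕜 (LinearMap.range A.toLinearMap) := by
  have hA := LinearMap.finrank_range_add_finrank_ker A.toLinearMap
  have hAA := LinearMap.finrank_range_add_finrank_ker (adjoint A ∘L A).toLinearMap
  rw [← ContinuousLinearMap.ker_adjoint_comp_self A] at hA
  omega

theorem ContinuousLinearMap.pow_apply_eq_of_forall_mem_eq {U : E →L[𝕜] E} {J : E →ₗ[𝕜] E}
    {S : Submodule 𝕜 E} (hUJ : ∀ x ∈ S, U x = J x) {N : ℕ} {y : E}
    (hS : ∀ k < N, (J ^ k) y ∈ S) : ∀ k ≤ N, (U ^ k) y = (J ^ k) y := by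
  intro k hk
  induction k with
  | zero => rfl
  | succ k ih =>
    rw [pow_succ', mul_apply_eq_comp, ih (by omega), hUJ _ (hS k (by omega)), pow_succ',
      Module.End.mul_apply]

theorem LinearIsometry.exists_mem_unitary_forall_eq [FiniteDimensional 𝕜 E] [CompleteSpace E]
    {S : Submodule 𝕜 E} (L : S →ₗᵢ[𝕜] E) : ∃ U ∈ unitary (E →L[𝕜] E), ∀ x : S, U x = L x :=
  let e : E ≃ₗᵢ[𝕜] E := L.extend.toLinearIsometryEquiv rfl
  ⟨Unitary.linearIsometryEquiv.symm e, (Unitary.linearIsometryEquiv.symm e).2, L.extend_apply⟩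

theorem ContinuousLinearMap.norm_sq_add_norm_sq_of_adjoint_comp_self_eq [CompleteSpace E]
    [CompleteSpace F] {T : E →L[𝕜] E} {D : E →L[𝕜] F} (hD : adjoint D ∘L D = 1 - adjoint T * T)
    (x : E) : ‖T x‖ ^ 2 + ‖D x‖ ^ 2 = ‖x‖ ^ 2 := by
  rw [apply_norm_sq_eq_inner_adjoint_left, apply_norm_sq_eq_inner_adjoint_left, hD,
    ← map_add, ← inner_add_left, ContinuousLinearMap.mul_def, sub_apply, comp_apply, add_sub_cancel,
    one_apply_eq_self, inner_self_eq_norm_sq]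

end General

theorem ContinuousLinearMap.exists_adjoint_comp_self_eq_one_sub {H : Type*}
    [NormedAddCommGroup H] [InnerProductSpace ℂ H] [CompleteSpace H] {T : H →L[ℂ] H}
    (hT : ‖T‖ ≤ 1) : ∃ D : H →L[ℂ] H, adjoint D ∘L D = 1 - adjoint T * T := by
  have hTT : star T * T ≤ 1 := by
    rw [← CStarAlgebra.norm_le_one_iff_of_nonneg _ (star_mul_self_nonneg T),
      CStarRing.norm_star_mul_self]
    nlinarith [norm_nonneg T]
  obtain ⟨D, hD⟩ := CStarAlgebra.nonneg_iff_eq_star_mul_self.mp (sub_nonneg.mpr hTT)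
  exact ⟨D, hD.symm⟩

section Dilation

variable {𝕜 H K : Type*} [RCLike 𝕜] [NormedAddCommGroup H] [InnerProductSpace 𝕜 H]
  [NormedAddCommGroup K] [InnerProductSpace 𝕜 K]

def wanderingMap (T : H →L[𝕜] H) (W : H →ₗᵢ[𝕜] K) (U : K →L[𝕜] K) : H →L[𝕜] K :=
  U ∘L W.toContinuousLinearMap - W.toContinuousLinearMap ∘L T

def dilationSpan (W : H →ₗᵢ[𝕜] K) (U : K →L[𝕜] K) (m : ℕ) : Submodule 𝕜 K :=
  Submodule.span 𝕜 {x : K | ∃ (h : H) (k : ℕ), k ≤ m ∧ x = (U ^ k) (W h)}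

variable {T : H →L[𝕜] H} {N : ℕ} {W : H →ₗᵢ[𝕜] K} {U : K →L[𝕜] K}

theorem pow_wanderingMap_apply (m : ℕ) (h : H) :
    (U ^ m) (wanderingMap T W U h) = (U ^ (m + 1)) (W h) - (U ^ m) (W (T h)) := by
  simp [wanderingMap, pow_succ]

theorem dilationSpan_zero : dilationSpan W U 0 = LinearMap.range W.toLinearMap := by
  conv_rhs => rw [← Submodule.span_eq (LinearMap.range W.toLinearMap), LinearMap.coe_range]
  simp [dilationSpan, Set.range, eq_comm]

theorem dilationSpan_succ (m : ℕ) :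
    dilationSpan W U (m + 1) =
      dilationSpan W U m ⊔ LinearMap.range ((U ^ m) ∘L wanderingMap T W U).toLinearMap := by
  apply le_antisymm
  · rw [dilationSpan, Submodule.span_le]
    rintro _ ⟨h, k, hk, rfl⟩
    rcases hk.lt_or_eq with hk | rfl
    · exact Submodule.mem_sup_left (Submodule.subset_span ⟨h, k, by omega, rfl⟩)
    · rw [← eq_sub_iff_add_eq'.mp (pow_wanderingMap_apply (T := T) m h)]
      exact Submodule.add_mem_sup (Submodule.subset_span ⟨T h, m, le_rfl, rfl⟩) ⟨h, rfl⟩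
  · refine sup_le (Submodule.span_mono ?_) ?_
    · rintro _ ⟨h, k, hk, rfl⟩
      exact ⟨h, k, by omega, rfl⟩
    · rintro _ ⟨h, rfl⟩
      rw [ContinuousLinearMap.coe_coe, comp_apply, pow_wanderingMap_apply]
      exact Submodule.sub_mem _ (Submodule.subset_span ⟨h, m + 1, le_rfl, rfl⟩)
        (Submodule.subset_span ⟨T h, m, by omega, rfl⟩)

variable [CompleteSpace H] [CompleteSpace K]

structure IsUnitaryDilation (T : H →L[𝕜] H) (N : ℕ) (W : H →ₗᵢ[𝕜] K) (U : K →L[𝕜] K) :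
    Prop where
  mem_unitary : U ∈ unitary (K →L[𝕜] K)
  adjoint_pow_apply : ∀ k : ℕ, 1 ≤ k → k ≤ N →
    ∀ h : H, adjoint W.toContinuousLinearMap ((U ^ k) (W h)) = (T ^ k) h

namespace IsUnitaryDilation

theorem inner_pow_apply (hd : IsUnitaryDilation T N W U) {k : ℕ} (hk : k ≤ N) (g h : H) :
    ⟪W g, (U ^ k) (W h)⟫_𝕜 = ⟪g, (T ^ k) h⟫_𝕜 := by
  rcases k.eq_zero_or_pos with rfl | hk0
  · simp
  · rw [← hd.adjoint_pow_apply k hk0 hk h, adjoint_inner_right]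
    rfl

theorem of_inner (hU : U ∈ unitary (K →L[𝕜] K))
    (hinner : ∀ k ≤ N, ∀ g h : H, ⟪W g, (U ^ k) (W h)⟫_𝕜 = ⟪g, (T ^ k) h⟫_𝕜) :
    IsUnitaryDilation T N W U :=
  ⟨hU, fun k _ hk h => ext_inner_left 𝕜 fun g => by
    rw [adjoint_inner_right]
    exact hinner k hk g h⟩

theorem map {K' : Type*} [NormedAddCommGroup K'] [InnerProductSpace 𝕜 K'] [CompleteSpace K']
    (hd : IsUnitaryDilation T N W U) (e : K ≃ₗᵢ[𝕜] K') :
    IsUnitaryDilation T N (e.toLinearIsometry.comp W) (e.conjStarAlgEquiv U) := by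
  refine of_inner (Unitary.map_mem _ hd.mem_unitary) fun k hk g h => ?_
  rw [← map_pow, LinearIsometryEquiv.conjStarAlgEquiv_apply_apply]
  simpa using hd.inner_pow_apply hk g h

theorem inner_wanderingMap (hd : IsUnitaryDilation T N W U) (hN : 1 ≤ N) (g h : H) :
    ⟪wanderingMap T W U g, wanderingMap T W U h⟫_𝕜 = ⟪g, h⟫_𝕜 - ⟪T g, T h⟫_𝕜 := by
  have hUW : ∀ g h : H, ⟪W g, U (W h)⟫_𝕜 = ⟪g, T h⟫_𝕜 := by
    simpa using hd.inner_pow_apply hN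
  simp only [wanderingMap, sub_apply, coe_comp, Function.comp_apply, inner_sub_left,
    inner_sub_right, LinearIsometry.coe_toContinuousLinearMap,
    inner_map_map_of_mem_unitary hd.mem_unitary, LinearIsometry.inner_map_map]
  rw [hUW, ← inner_conj_symm (U (W g)), hUW, inner_conj_symm]
  ring

theorem inner_pow_wanderingMap (hd : IsUnitaryDilation T N W U) {m : ℕ} (hm : m < N)
    (g h : H) : ⟪W g, (U ^ m) (wanderingMap T W U h)⟫_𝕜 = 0 := by
  rw [pow_wanderingMap_apply, inner_sub_right, hd.inner_pow_apply hm, hd.inner_pow_apply hm.le,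
    ← mul_apply_eq_comp, ← pow_succ, sub_self]

theorem adjoint_comp_self_pow_comp_wanderingMap (hd : IsUnitaryDilation T N W U) {m : ℕ}
    (hm : m < N) :
    adjoint ((U ^ m) ∘L wanderingMap T W U) ∘L ((U ^ m) ∘L wanderingMap T W U) =
      1 - adjoint T * T := by
  ext1 h
  refine ext_inner_left 𝕜 fun g => ?_
  rw [comp_apply, adjoint_inner_right, comp_apply, comp_apply,
    inner_map_map_of_mem_unitary (pow_mem hd.mem_unitary m), hd.inner_wanderingMap (by omega)]
  simp [inner_sub_right, adjoint_inner_right]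

theorem isOrtho_dilationSpan_range (hd : IsUnitaryDilation T N W U) {m : ℕ} (hm : m < N) :
    dilationSpan W U m ⟂ LinearMap.range ((U ^ m) ∘L wanderingMap T W U).toLinearMap := by
  rw [Submodule.isOrtho_iff_le, dilationSpan, Submodule.span_le]
  rintro _ ⟨g, k, hk, rfl⟩
  rw [SetLike.mem_coe, Submodule.mem_orthogonal']
  rintro _ ⟨h, rfl⟩
  obtain ⟨j, rfl⟩ := Nat.exists_eq_add_of_le hk
  rw [coe_coe, comp_apply, pow_add, mul_apply_eq_comp,
    inner_map_map_of_mem_unitary (pow_mem hd.mem_unitary k)]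
  exact hd.inner_pow_wanderingMap (by omega) g h

theorem finrank_dilationSpan [FiniteDimensional 𝕜 H] [FiniteDimensional 𝕜 K]
    (hd : IsUnitaryDilation T N W U) {m : ℕ} (hm : m ≤ N) :
    Module.finrank 𝕜 (dilationSpan W U m) = Module.finrank 𝕜 H +
      m * Module.finrank 𝕜 (LinearMap.range (1 - adjoint T * T).toLinearMap) := by
  induction m with
  | zero =>
    rw [dilationSpan_zero, LinearMap.finrank_range_of_inj W.injective, zero_mul, add_zero]
  | succ m ih =>
    have hsum := Submodule.finrank_sup_add_finrank_inf_eq (dilationSpan W U m)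
      (LinearMap.range ((U ^ m) ∘L wanderingMap T W U).toLinearMap)
    rw [(hd.isOrtho_dilationSpan_range hm).disjoint.eq_bot, finrank_bot, add_zero,
      ← dilationSpan_succ, ← finrank_range_adjoint_comp_self,
      hd.adjoint_comp_self_pow_comp_wanderingMap hm, ih (by omega)] at hsum
    rw [hsum]
    ring

end IsUnitaryDilation

end Dilation

section Model

variable {𝕜 H E : Type*}

abbrev DilationModel (H E : Type*) (N : ℕ) : Type _ :=
  WithLp 2 (H × PiLp 2 (fun _ : Fin N => E))

namespace DilationModel

@[ext]
theorem ext {N : ℕ} {x y : DilationModel H E N} (h₁ : x.fst = y.fst)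
    (h₂ : ∀ i, x.snd i = y.snd i) : x = y :=
  (WithLp.ext_iff 2).2 (Prod.ext h₁ (PiLp.ext h₂))

variable [RCLike 𝕜] [NormedAddCommGroup H] [InnerProductSpace 𝕜 H]
  [NormedAddCommGroup E] [InnerProductSpace 𝕜 E]
variable (T : H →L[𝕜] H) (D : H →ₗ[𝕜] E) (N : ℕ)

def defectCons : DilationModel H E N →ₗ[𝕜] Fin (N + 1) → E where
  toFun x := Fin.cons (D x.fst) x.snd
  map_add' x y := by ext i; cases i using Fin.cases <;> simp
  map_smul' c x := by ext i; cases i using Fin.cases <;> simp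

def shift : DilationModel H E N →ₗ[𝕜] DilationModel H E N where
  toFun x := toLp 2 (T x.fst, toLp 2 fun i => defectCons D N x i.castSucc)
  map_add' x y := by ext <;> simp
  map_smul' c x := by ext <;> simp

variable (𝕜 E) in
def embed : H →ₗᵢ[𝕜] DilationModel H E N where
  toFun h := toLp 2 (h, 0)
  map_add' g h := by ext <;> simp
  map_smul' c h := by ext <;> simp
  norm_map' h := by simp

@[simp]
theorem fst_embed (h : H) : (embed 𝕜 E N h).fst = h :=
  rfl

@[simp]
theorem snd_embed (h : H) : (embed 𝕜 E N h).snd = 0 :=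
  rfl

variable {T D N}

theorem norm_shift_sq_add (hD : ∀ h, ‖T h‖ ^ 2 + ‖D h‖ ^ 2 = ‖h‖ ^ 2)
    (x : DilationModel H E N) :
    ‖shift T D N x‖ ^ 2 + ‖defectCons D N x (Fin.last N)‖ ^ 2 = ‖x‖ ^ 2 := by
  have hcons : ∑ i, ‖defectCons D N x i‖ ^ 2 = ‖D x.fst‖ ^ 2 + ‖x.snd‖ ^ 2 := by
    rw [Fin.sum_univ_succ, PiLp.norm_sq_eq_of_L2]
    rfl
  rw [Fin.sum_univ_castSucc] at hcons
  rw [prod_norm_sq_eq_of_L2, prod_norm_sq_eq_of_L2, PiLp.norm_sq_eq_of_L2, ← hD x.fst]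
  change ‖T x.fst‖ ^ 2 + ∑ i : Fin N, ‖defectCons D N x i.castSucc‖ ^ 2 + _ = _
  linarith

theorem fst_shift_pow (k : ℕ) (x : DilationModel H E N) :
    ((shift T D N ^ k) x).fst = (T ^ k) x.fst := by
  induction k with
  | zero => rfl
  | succ k ih =>
    rw [pow_succ', Module.End.mul_apply, pow_succ', mul_apply_eq_comp, ← ih]
    rfl

theorem defectCons_shift_pow_embed (k : ℕ) (h : H) (i : Fin (N + 1)) (hi : k < i) :
    defectCons D N ((shift T D N ^ k) (embed 𝕜 E N h)) i = 0 := by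
  induction k generalizing i with
  | zero =>
    cases i using Fin.cases with
    | zero => simp at hi
    | succ j => rfl
  | succ k ih =>
    cases i using Fin.cases with
    | zero => simp at hi
    | succ j =>
      rw [pow_succ', Module.End.mul_apply]
      exact ih j.castSucc (by simpa using hi)

variable [FiniteDimensional 𝕜 H] [FiniteDimensional 𝕜 E]

theorem exists_isUnitaryDilation [CompleteSpace H] [CompleteSpace E]
    (hD : ∀ h, ‖T h‖ ^ 2 + ‖D h‖ ^ 2 = ‖h‖ ^ 2) (N : ℕ) :
    ∃ U, IsUnitaryDilation T N (embed 𝕜 E N) U := by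
  let S : Submodule 𝕜 (DilationModel H E N) :=
    LinearMap.ker (LinearMap.proj (Fin.last N) ∘ₗ defectCons D N)
  let L : S →ₗᵢ[𝕜] DilationModel H E N :=
    { toLinearMap := shift T D N ∘ₗ S.subtype
      norm_map' := fun x => by
        have hx := norm_shift_sq_add hD (x : DilationModel H E N)
        rw [show defectCons D N x (Fin.last N) = 0 from x.2, norm_zero, zero_pow two_ne_zero,
          add_zero, sq_eq_sq₀ (norm_nonneg _) (norm_nonneg _)] at hx
        exact hx }
  obtain ⟨U, hU, hUL⟩ := L.exists_mem_unitary_forall_eq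
  refine ⟨U, IsUnitaryDilation.of_inner hU fun k hk g h => ?_⟩
  rw [pow_apply_eq_of_forall_mem_eq (fun x hx => hUL ⟨x, hx⟩)
    (fun j hj => defectCons_shift_pow_embed j h (Fin.last N) (by simpa using hj)) k hk]
  simp [fst_shift_pow]

theorem finrank_eq (N : ℕ) :
    Module.finrank 𝕜 (DilationModel H E N) = Module.finrank 𝕜 H + N * Module.finrank 𝕜 E := by
  rw [(WithLp.linearEquiv 2 𝕜 _).finrank_eq, Module.finrank_prod,
    (WithLp.linearEquiv 2 𝕜 _).finrank_eq, Module.finrank_pi_fintype]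
  simp

end DilationModel

end Model

theorem minimal_dimension_of_N_dilations_general
    (H : Type) [NormedAddCommGroup H] [InnerProductSpace ℂ H] [FiniteDimensional ℂ H]
    (n : ℕ) (hn : Module.finrank ℂ H = n)
    (T : H →L[ℂ] H) (hT : ‖T‖ ≤ 1) (N : ℕ)
    (dT : ℕ) (hdT : dT = Module.finrank ℂ (LinearMap.range (1 - adjoint T * T).toLinearMap)) :
    (∃ (W : H →ₗᵢ[ℂ] EuclideanSpace ℂ (Fin (n + N * dT)))
        (U : EuclideanSpace ℂ (Fin (n + N * dT)) →L[ℂ] EuclideanSpace ℂ (Fin (n + N * dT))),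
        U ∈ unitary _ ∧
        ∀ k : ℕ, 1 ≤ k → k ≤ N →
          ∀ h : H, adjoint W.toContinuousLinearMap ((U ^ k) (W h)) = (T ^ k) h) ∧
    (∀ (K : Type) (_i1 : NormedAddCommGroup K) (_i2 : InnerProductSpace ℂ K)
        (_i3 : FiniteDimensional ℂ K) (W : H →ₗᵢ[ℂ] K) (U : K →L[ℂ] K),
        U ∈ unitary (K →L[ℂ] K) →
        (∀ k : ℕ, 1 ≤ k → k ≤ N →
          ∀ h : H, adjoint W.toContinuousLinearMap ((U ^ k) (W h)) = (T ^ k) h) →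
        n + N * dT ≤ Module.finrank ℂ K) ∧
    (∀ (K : Type) (_i1 : NormedAddCommGroup K) (_i2 : InnerProductSpace ℂ K)
        (_i3 : FiniteDimensional ℂ K) (W : H →ₗᵢ[ℂ] K) (U : K →L[ℂ] K),
        U ∈ unitary (K →L[ℂ] K) →
        (∀ k : ℕ, 1 ≤ k → k ≤ N →
          ∀ h : H, adjoint W.toContinuousLinearMap ((U ^ k) (W h)) = (T ^ k) h) →
        ((Submodule.span ℂ {x : K | ∃ (h : H) (k : ℕ), k ≤ N ∧ x = (U ^ k) (W h)} = ⊤) ↔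
          Module.finrank ℂ K = n + N * dT)) := by
  obtain ⟨D, hD⟩ := exists_adjoint_comp_self_eq_one_sub hT
  have hdT' : dT = Module.finrank ℂ (LinearMap.range D.toLinearMap) := by
    rw [hdT, ← hD, finrank_range_adjoint_comp_self]
  have hspan : ∀ {K : Type} [NormedAddCommGroup K] [InnerProductSpace ℂ K]
      [FiniteDimensional ℂ K] {W : H →ₗᵢ[ℂ] K} {U : K →L[ℂ] K}, IsUnitaryDilation T N W U →
      Module.finrank ℂ (dilationSpan W U N) = n + N * dT := fun hd => by
    rw [hd.finrank_dilationSpan le_rfl, hn, hdT]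
  refine ⟨?_, fun K _ _ _ W U hU hdil => ?_, fun K _ _ _ W U hU hdil => ?_⟩
  · obtain ⟨U, hd⟩ := DilationModel.exists_isUnitaryDilation (D := D.toLinearMap.rangeRestrict)
      (norm_sq_add_norm_sq_of_adjoint_comp_self_eq hD) N
    have hdim :
        Module.finrank ℂ (DilationModel H (LinearMap.range D.toLinearMap) N) = n + N * dT := by
      rw [DilationModel.finrank_eq, hn, hdT']
    have hd' := hd.map ((stdOrthonormalBasis ℂ _).reindex (finCongr hdim)).repr
    exact ⟨_, _, hd'.mem_unitary, hd'.adjoint_pow_apply⟩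
  · rw [← hspan ⟨hU, hdil⟩]
    exact Submodule.finrank_le _
  · rw [← hspan ⟨hU, hdil⟩]
    exact ⟨fun htop => by rw [dilationSpan, htop, finrank_top],
      fun hK => Submodule.eq_top_of_finrank_eq hK.symm⟩

/-- **Minimal dimension of unitary N-dilations.** Let `T` be a contraction on an
`n`-dimensional complex Hilbert space `H`, and `d_T = rank (I - T*T)`. Then:
(1) `T` has a unitary `N`-dilation on a space of dimension `n + N·d_T`;
(2) every finite-dimensional unitary `N`-dilation of `T` acts on a space of dimension at
least `n + N·d_T`;
(3) a finite-dimensional unitary `N`-dilation is `N`-minimal (the span of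
`{U^k h : h ∈ H, 0 ≤ k ≤ N}` is everything) iff its space has dimension exactly
`n + N·d_T`. -/
theorem minimal_dimension_of_N_dilations
    (H : Type) [NormedAddCommGroup H] [InnerProductSpace ℂ H] [FiniteDimensional ℂ H]
    (n : ℕ) (hn : Module.finrank ℂ H = n)
    (T : H →L[ℂ] H) (hT : ‖T‖ ≤ 1) (N : ℕ) (hN : 0 < N)
    (dT : ℕ) (hdT : dT = Module.finrank ℂ (LinearMap.range (1 - adjoint T * T).toLinearMap)) :
    (∃ (W : H →ₗᵢ[ℂ] EuclideanSpace ℂ (Fin (n + N * dT)))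
        (U : EuclideanSpace ℂ (Fin (n + N * dT)) →L[ℂ] EuclideanSpace ℂ (Fin (n + N * dT))),
        U ∈ unitary _ ∧
        ∀ k : ℕ, 1 ≤ k → k ≤ N →
          ∀ h : H, adjoint W.toContinuousLinearMap ((U ^ k) (W h)) = (T ^ k) h) ∧
    (∀ (K : Type) (_i1 : NormedAddCommGroup K) (_i2 : InnerProductSpace ℂ K)
        (_i3 : FiniteDimensional ℂ K) (W : H →ₗᵢ[ℂ] K) (U : K →L[ℂ] K),
        U ∈ unitary (K →L[ℂ] K) →
        (∀ k : ℕ, 1 ≤ k → k ≤ N →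
          ∀ h : H, adjoint W.toContinuousLinearMap ((U ^ k) (W h)) = (T ^ k) h) →
        n + N * dT ≤ Module.finrank ℂ K) ∧
    (∀ (K : Type) (_i1 : NormedAddCommGroup K) (_i2 : InnerProductSpace ℂ K)
        (_i3 : FiniteDimensional ℂ K) (W : H →ₗᵢ[ℂ] K) (U : K →L[ℂ] K),
        U ∈ unitary (K →L[ℂ] K) →
        (∀ k : ℕ, 1 ≤ k → k ≤ N →
          ∀ h : H, adjoint W.toContinuousLinearMap ((U ^ k) (W h)) = (T ^ k) h) →
        ((Submodule.span ℂ {x : K | ∃ (h : H) (k : ℕ), k ≤ N ∧ x = (U ^ k) (W h)} = ⊤) ↔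
          Module.finrank ℂ K = n + N * dT)) :=
  minimal_dimension_of_N_dilations_general H n hn T hT N dT hdT
end

section
/- Let T_1, ..., T_k be commuting contractions on a finite-dimensional Hilbert space H that admit a unitary N-dilation U_1, ..., U_k acting on a finite-dimensional space K of dimension m. Then there exist m points w^1, ..., w^m on the k-torus 𝕋^k such that for every polynomial p in k variables of total degree at most N, ‖p(T_1, ..., T_k)‖ ≤ max_i |p(w^i)|. In particular ‖p(T_1,...,T_k)‖ ≤ sup{|p(z)| : z ∈ 𝕋^k}. -/
/-!
Commuting unitaries on a finite-dimensional space have an orthonormal basis of joint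
eigenvectors: their real and imaginary parts form a commuting family of self-adjoint operators,
which is simultaneously diagonalizable. The joint eigenvalues `w¹, …, wᵐ` lie on the torus, and in
this basis `p(U)` is diagonal with entries `p(wⁱ)`, so `‖p(U)‖ ≤ maxᵢ |p(wⁱ)|`. When `deg p ≤ N`
the dilation property gives `p(T) = W* p(U) W`, and compressing by an isometry does not increase
the norm.
-/

open ContinuousLinearMap

/-- Evaluation of a multivariate polynomial at a commuting tuple of operators. -/
noncomputable def mvPolyEvalCLM {H : Type} [NormedAddCommGroup H] [InnerProductSpace ℂ H]
    {k : ℕ} (T : Fin k → (H →L[ℂ] H)) (hT : ∀ i j, Commute (T i) (T j))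
    (p : MvPolynomial (Fin k) ℂ) : H →L[ℂ] H :=
  ∑ d ∈ p.support, p.coeff d •
    Finset.univ.noncommProd (fun i => (T i) ^ (d i))
      (fun i _ j _ _ => (hT i j).pow_pow (d i) (d j))

open scoped Function ComplexStarModule

theorem LinearMap.IsSymmetric.exists_orthonormalBasis_apply_eq_smul_of_pairwise_commute
    {𝕜 E ι : Type*} [RCLike 𝕜] [NormedAddCommGroup E] [InnerProductSpace 𝕜 E]
    [FiniteDimensional 𝕜 E] {T : ι → E →ₗ[𝕜] E} (hT : ∀ i, (T i).IsSymmetric)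
    (hC : Pairwise (Commute on T)) :
    ∃ (b : OrthonormalBasis (Fin (Module.finrank 𝕜 E)) 𝕜 E)
      (χ : Fin (Module.finrank 𝕜 E) → ι → 𝕜), ∀ a i, T i (b a) = χ a i • b a := by
  classical
  let V : (ι → 𝕜) → Submodule 𝕜 E := fun χ => ⨅ i, Module.End.eigenspace (T i) (χ i)
  have hV : DirectSum.IsInternal V := directSum_isInternal_of_pairwise_commute hT hC
  -- only finitely many joint eigenspaces are nonzero, and the basis construction needs that
  let _ : Fintype {χ // V χ ≠ ⊥} := hV.submodule_iSupIndep.fintypeNeBotOfFiniteDimensional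
  have hV' : DirectSum.IsInternal fun χ : {χ // V χ ≠ ⊥} => V χ :=
    DirectSum.isInternal_ne_bot_iff.mpr hV
  have hO := (orthogonalFamily_iInf_eigenspaces hT).comp (Subtype.val_injective (p := (V · ≠ ⊥)))
  refine ⟨hV'.subordinateOrthonormalBasis rfl hO,
    fun a => (hV'.subordinateOrthonormalBasisIndex rfl a hO).val, fun a i => ?_⟩
  have hmem := Submodule.mem_iInf _ |>.mp (hV'.subordinateOrthonormalBasis_subordinate rfl a hO) i
  exact Module.End.mem_eigenspace_iff.mp hmem

section StarCommute

variable {A : Type*} [Ring A] [StarRing A] [Algebra ℂ A] [StarModule ℂ A]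

theorem Commute.realPart_left {x y : A} (h : Commute x y) (h' : Commute (star x) y) :
    Commute (ℜ x : A) y := by
  rw [realPart_apply_coe]
  exact (h.add_left h').smul_left _

theorem Commute.imaginaryPart_left {x y : A} (h : Commute x y) (h' : Commute (star x) y) :
    Commute (ℑ x : A) y := by
  rw [imaginaryPart_apply_coe]
  exact ((h.sub_left h').smul_left _).smul_left _

end StarCommute

theorem Commute.star_left_of_mem_unitary {R : Type*} [Monoid R] [StarMul R] {u v : R}
    (hu : u ∈ unitary R) (h : Commute u v) : Commute (star u) v :=
  Commute.units_inv_left (u := Unitary.toUnits ⟨u, hu⟩) h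

theorem ContinuousLinearMap.exists_orthonormalBasis_apply_eq_smul_of_mem_unitary
    {E ι : Type*} [NormedAddCommGroup E] [InnerProductSpace ℂ E] [FiniteDimensional ℂ E]
    {U : ι → E →L[ℂ] E} (hU : ∀ i, U i ∈ unitary (E →L[ℂ] E))
    (hC : ∀ i j, Commute (U i) (U j)) :
    ∃ (b : OrthonormalBasis (Fin (Module.finrank ℂ E)) ℂ E)
      (w : Fin (Module.finrank ℂ E) → ι → ℂ),
      (∀ a i, ‖w a i‖ = 1) ∧ ∀ a i, U i (b a) = w a i • b a := by
  let A : ι ⊕ ι → E →L[ℂ] E := Sum.elim (fun i => ℜ (U i)) (fun i => ℑ (U i))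
  have hAU : ∀ s j, Commute (A s) (U j) ∧ Commute (A s) (star (U j)) := by
    have hU' : ∀ i j, Commute (U i) (star (U j)) := fun i j =>
      ((hC j i).star_left_of_mem_unitary (hU j)).symm
    have hU'' : ∀ i j, Commute (star (U i)) (star (U j)) := fun i j => (hC i j).star_star
    rintro (i | i) j
    · exact ⟨(hC i j).realPart_left ((hC i j).star_left_of_mem_unitary (hU i)),
        (hU' i j).realPart_left (hU'' i j)⟩
    · exact ⟨(hC i j).imaginaryPart_left ((hC i j).star_left_of_mem_unitary (hU i)),
        (hU' i j).imaginaryPart_left (hU'' i j)⟩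
  have hAA : ∀ s t, Commute (A s) (A t) := by
    rintro s (j | j)
    · exact ((hAU s j).1.symm.realPart_left (hAU s j).2.symm).symm
    · exact ((hAU s j).1.symm.imaginaryPart_left (hAU s j).2.symm).symm
  have hsymm : ∀ s, (A s : E →ₗ[ℂ] E).IsSymmetric := by
    rintro (i | i)
    · exact isSelfAdjoint_iff_isSymmetric.mp (ℜ (U i)).2
    · exact isSelfAdjoint_iff_isSymmetric.mp (ℑ (U i)).2
  obtain ⟨b, χ, hχ⟩ := LinearMap.IsSymmetric.exists_orthonormalBasis_apply_eq_smul_of_pairwise_commute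
    hsymm fun s t _ => (hAA s t).map toLinearMapRingHom
  have heigen : ∀ a i, U i (b a) = (χ a (.inl i) + Complex.I * χ a (.inr i)) • b a := by
    intro a i
    have h := congrArg (· (b a)) (realPart_add_I_smul_imaginaryPart (U i))
    simp only [add_apply, smul_apply] at h
    rw [← h, add_smul, mul_smul, ← hχ a (.inl i), ← hχ a (.inr i)]
    rfl
  refine ⟨b, _, fun a i => ?_, heigen⟩
  simpa [heigen, norm_smul, b.orthonormal.1 a] using norm_map_of_mem_unitary (hU i) (b a)

section Eigenvector

variable {R M : Type*} [CommSemiring R] [TopologicalSpace M] [AddCommMonoid M] [Module R M]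

theorem ContinuousLinearMap.pow_apply_eq_smul {f : M →L[R] M} {x : M} {c : R}
    (hx : f x = c • x) (n : ℕ) : (f ^ n) x = c ^ n • x := by
  induction n with
  | zero => simp
  | succ n ih => rw [pow_succ, mul_apply_eq_comp, hx, map_smul, ih, smul_smul, pow_succ']

theorem Finset.noncommProd_apply_eq_smul {α : Type*} (s : Finset α) (f : α → M →L[R] M)
    (hcomm : (s : Set α).Pairwise (Commute on f)) {x : M} {c : α → R}
    (hx : ∀ i ∈ s, f i x = c i • x) :
    s.noncommProd f hcomm x = (∏ i ∈ s, c i) • x := by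
  classical
  induction s using Finset.induction_on with
  | empty => simp
  | insert a s ha ih =>
    rw [noncommProd_insert_of_notMem _ _ _ _ ha, mul_apply_eq_comp,
      ih (hcomm.mono (by simp)) fun i hi => hx i (mem_insert_of_mem hi), map_smul,
      hx a (mem_insert_self a s), prod_insert ha, smul_smul, mul_comm]

end Eigenvector

theorem OrthonormalBasis.opNorm_le_of_apply_eq_smul {𝕜 E ι : Type*} [RCLike 𝕜]
    [NormedAddCommGroup E] [InnerProductSpace 𝕜 E] [Fintype ι] (b : OrthonormalBasis ι 𝕜 E)
    {S : E →L[𝕜] E} {c : ι → 𝕜} (hS : ∀ a, S (b a) = c a • b a) {M : ℝ} (hM0 : 0 ≤ M)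
    (hM : ∀ a, ‖c a‖ ≤ M) : ‖S‖ ≤ M := by
  refine S.opNorm_le_bound hM0 fun x => ?_
  have hSx : S x = b.repr.symm (WithLp.toLp 2 fun a => c a * b.repr x a) := by
    conv_lhs => rw [← b.sum_repr x]
    rw [map_sum, ← b.sum_repr_symm]
    refine Finset.sum_congr rfl fun a _ => ?_
    rw [map_smul, hS, smul_smul, mul_comm]
  rw [hSx, LinearIsometryEquiv.norm_map, ← b.repr.norm_map x, EuclideanSpace.norm_eq,
    EuclideanSpace.norm_eq, ← Real.sqrt_sq hM0, ← Real.sqrt_mul (sq_nonneg M), Finset.mul_sum]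
  gcongr with a
  rw [norm_mul, mul_pow]
  gcongr
  exact hM a

theorem ContinuousLinearMap.norm_adjoint_comp_comp_le {𝕜 E F : Type*} [RCLike 𝕜]
    [NormedAddCommGroup E] [InnerProductSpace 𝕜 E] [CompleteSpace E]
    [NormedAddCommGroup F] [InnerProductSpace 𝕜 F] [CompleteSpace F]
    {V : E →L[𝕜] F} (hV : ‖V‖ ≤ 1) (A : F →L[𝕜] F) : ‖adjoint V ∘L A ∘L V‖ ≤ ‖A‖ :=
  calc ‖adjoint V ∘L A ∘L V‖ ≤ ‖adjoint V‖ * (‖A‖ * ‖V‖) :=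
        (opNorm_comp_le _ _).trans (by gcongr; exact opNorm_comp_le _ _)
    _ ≤ 1 * (‖A‖ * 1) := by gcongr; simpa only [LinearIsometryEquiv.norm_map]
    _ = ‖A‖ := by ring

theorem mvPolyEvalCLM_apply_eq_smul {E : Type} [NormedAddCommGroup E] [InnerProductSpace ℂ E]
    {k : ℕ} (U : Fin k → E →L[ℂ] E) (hU : ∀ i j, Commute (U i) (U j))
    (p : MvPolynomial (Fin k) ℂ) {x : E} {c : Fin k → ℂ} (hx : ∀ i, U i x = c i • x) :
    mvPolyEvalCLM U hU p x = MvPolynomial.eval c p • x := by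
  rw [mvPolyEvalCLM, sum_apply, MvPolynomial.eval_eq', Finset.sum_smul]
  refine Finset.sum_congr rfl fun d _ => ?_
  rw [smul_apply, ← smul_smul]
  exact congrArg _ (Finset.noncommProd_apply_eq_smul _ _ _
    fun i _ => ContinuousLinearMap.pow_apply_eq_smul (hx i) (d i))

theorem mvPolyEvalCLM_eq_adjoint_comp_comp {H K : Type} [NormedAddCommGroup H]
    [InnerProductSpace ℂ H] [CompleteSpace H] [NormedAddCommGroup K] [InnerProductSpace ℂ K]
    [CompleteSpace K] {k N : ℕ} (T : Fin k → (H →L[ℂ] H)) (hT : ∀ i j, Commute (T i) (T j))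
    (W : H →L[ℂ] K) (U : Fin k → (K →L[ℂ] K)) (hU : ∀ i j, Commute (U i) (U j))
    (hdil : ∀ m : Fin k → ℕ, (∑ i, m i) ≤ N → ∀ h : H,
      adjoint W ((Finset.univ.noncommProd (fun i => (U i) ^ (m i))
          (fun i _ j _ _ => (hU i j).pow_pow (m i) (m j))) (W h)) =
        (Finset.univ.noncommProd (fun i => (T i) ^ (m i))
          (fun i _ j _ _ => (hT i j).pow_pow (m i) (m j))) h)
    {p : MvPolynomial (Fin k) ℂ} (hp : p.totalDegree ≤ N) :
    mvPolyEvalCLM T hT p = adjoint W ∘L mvPolyEvalCLM U hU p ∘L W := by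
  ext h
  simp only [mvPolyEvalCLM, comp_apply, sum_apply, smul_apply, map_sum, map_smul]
  refine Finset.sum_congr rfl fun d hd => ?_
  have hdN : ∑ i, d i ≤ N := by
    simpa [Finsupp.sum_fintype] using (MvPolynomial.le_totalDegree hd).trans hp
  rw [hdil d hdN h]

theorem MvPolynomial.norm_eval_le_sSup_torus {σ : Type*} [Fintype σ] (p : MvPolynomial σ ℂ)
    {z : σ → ℂ} (hz : ∀ j, ‖z j‖ = 1) :
    ‖eval z p‖ ≤ sSup {x : ℝ | ∃ z : σ → ℂ, (∀ j, ‖z j‖ = 1) ∧ x = ‖eval z p‖} := by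
  have htorus : {x : ℝ | ∃ z : σ → ℂ, (∀ j, ‖z j‖ = 1) ∧ x = ‖eval z p‖} =
      (fun z => ‖eval z p‖) '' Set.univ.pi fun _ => Metric.sphere 0 1 := by
    ext x
    simp [eq_comm]
  refine le_csSup ?_ ⟨z, hz, rfl⟩
  rw [htorus]
  exact ((isCompact_univ_pi fun _ => isCompact_sphere 0 1).image
    (continuous_eval p).norm).bddAbove

theorem sharpened_von_neumann_general
    (H K : Type)
    [NormedAddCommGroup H] [InnerProductSpace ℂ H] [FiniteDimensional ℂ H]
    [NormedAddCommGroup K] [InnerProductSpace ℂ K] [FiniteDimensional ℂ K]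
    (k N : ℕ) (T : Fin k → (H →L[ℂ] H))
    (hTcomm : ∀ i j, Commute (T i) (T j))
    (W : H →ₗᵢ[ℂ] K)
    (U : Fin k → (K →L[ℂ] K)) (hU : ∀ i, U i ∈ unitary (K →L[ℂ] K))
    (hUcomm : ∀ i j, Commute (U i) (U j))
    (hdil : ∀ m : Fin k → ℕ, (∑ i, m i) ≤ N →
      ∀ h : H,
        adjoint W.toContinuousLinearMap
          ((Finset.univ.noncommProd (fun i => (U i) ^ (m i))
              (fun i _ j _ _ => (hUcomm i j).pow_pow (m i) (m j))) (W h)) =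
        (Finset.univ.noncommProd (fun i => (T i) ^ (m i))
            (fun i _ j _ _ => (hTcomm i j).pow_pow (m i) (m j))) h) :
    ∃ w : Fin (Module.finrank ℂ K) → Fin k → ℂ,
      (∀ i j, ‖w i j‖ = 1) ∧
      ∀ p : MvPolynomial (Fin k) ℂ, p.totalDegree ≤ N →
        ‖mvPolyEvalCLM T hTcomm p‖ ≤
          sSup (Set.range fun i => ‖MvPolynomial.eval (w i) p‖) ∧
        ‖mvPolyEvalCLM T hTcomm p‖ ≤
          sSup {x : ℝ | ∃ z : Fin k → ℂ, (∀ j, ‖z j‖ = 1) ∧ x = ‖MvPolynomial.eval z p‖} := by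
  obtain ⟨b, w, hw, hUw⟩ := exists_orthonormalBasis_apply_eq_smul_of_mem_unitary hU hUcomm
  refine ⟨w, hw, fun p hp => ?_⟩
  have hpU : ‖mvPolyEvalCLM U hUcomm p‖ ≤
      sSup (Set.range fun a => ‖MvPolynomial.eval (w a) p‖) :=
    b.opNorm_le_of_apply_eq_smul (fun a => mvPolyEvalCLM_apply_eq_smul U hUcomm p (hUw a))
      (Real.sSup_nonneg (by rintro _ ⟨a, rfl⟩; exact norm_nonneg _))
      fun a => le_csSup (Set.finite_range _).bddAbove ⟨a, rfl⟩
  have hpT : ‖mvPolyEvalCLM T hTcomm p‖ ≤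
      sSup (Set.range fun a => ‖MvPolynomial.eval (w a) p‖) := by
    rw [mvPolyEvalCLM_eq_adjoint_comp_comp T hTcomm W.toContinuousLinearMap U hUcomm hdil hp]
    exact (norm_adjoint_comp_comp_le W.norm_toContinuousLinearMap_le _).trans hpU
  refine ⟨hpT, hpT.trans (Real.sSup_le ?_ ?_)⟩
  · rintro _ ⟨a, rfl⟩
    exact p.norm_eval_le_sSup_torus (hw a)
  · exact Real.sSup_nonneg (by rintro _ ⟨z, -, rfl⟩; exact norm_nonneg _)

/-- **Sharpened von Neumann inequality.** Let `T₁, …, T_k` be commuting contractions on a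
finite-dimensional Hilbert space `H` admitting a unitary `N`-dilation `U₁, …, U_k` on a
finite-dimensional space `K` with `dim K = m`. Then there are `m` points `w¹, …, wᵐ` on
the `k`-torus such that `‖p(T₁, …, T_k)‖ ≤ max_i |p(wⁱ)|` for every polynomial `p` of
total degree at most `N`; in particular `‖p(T₁, …, T_k)‖ ≤ sup_{𝕋^k} |p|`. -/
theorem sharpened_von_neumann
    (H K : Type)
    [NormedAddCommGroup H] [InnerProductSpace ℂ H] [FiniteDimensional ℂ H]
    [NormedAddCommGroup K] [InnerProductSpace ℂ K] [FiniteDimensional ℂ K]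
    (k N : ℕ) (T : Fin k → (H →L[ℂ] H)) (hT : ∀ i, ‖T i‖ ≤ 1)
    (hTcomm : ∀ i j, Commute (T i) (T j))
    (W : H →ₗᵢ[ℂ] K)
    (U : Fin k → (K →L[ℂ] K)) (hU : ∀ i, U i ∈ unitary (K →L[ℂ] K))
    (hUcomm : ∀ i j, Commute (U i) (U j))
    (hdil : ∀ m : Fin k → ℕ, (∑ i, m i) ≤ N →
      ∀ h : H,
        adjoint W.toContinuousLinearMap
          ((Finset.univ.noncommProd (fun i => (U i) ^ (m i))
              (fun i _ j _ _ => (hUcomm i j).pow_pow (m i) (m j))) (W h)) =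
        (Finset.univ.noncommProd (fun i => (T i) ^ (m i))
            (fun i _ j _ _ => (hTcomm i j).pow_pow (m i) (m j))) h) :
    ∃ w : Fin (Module.finrank ℂ K) → Fin k → ℂ,
      (∀ i j, ‖w i j‖ = 1) ∧
      ∀ p : MvPolynomial (Fin k) ℂ, p.totalDegree ≤ N →
        ‖mvPolyEvalCLM T hTcomm p‖ ≤
          sSup (Set.range fun i => ‖MvPolynomial.eval (w i) p‖) ∧
        ‖mvPolyEvalCLM T hTcomm p‖ ≤
          sSup {x : ℝ | ∃ z : Fin k → ℂ, (∀ j, ‖z j‖ = 1) ∧ x = ‖MvPolynomial.eval z p‖} :=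
  sharpened_von_neumann_general H K k N T hTcomm W U hU hUcomm hdil
end

section
/- Let ζ be a point in the open unit disc 𝔻 ⊂ ℂ and N a positive integer. Then there exist N+1 points w_0, ..., w_N on the unit circle 𝕋 such that for every polynomial p of degree at most N, |p(ζ)| ≤ max_i |p(w_i)|. -/
open Polynomial ComplexConjugate Finset
open scoped ComplexOrder

/-!
The nodes are the roots of `Q(z) = z^N (z - ζ) - (1 - ζ̄ z)`, i.e. the solutions of `B(z) = 1`
for the Blaschke product `B(z) = z^N (z - ζ) / (1 - ζ̄ z)` of degree `N + 1`; as `|B| < 1`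
inside and `|B| > 1` outside the disc, they lie on the unit circle, and they are simple.
The Lagrange basis at these nodes, evaluated at `ζ`, has the weights
`Q(ζ) / ((ζ - w) Q'(w)) = (1 - |ζ|²) / (N |w - ζ|² + 1 - |ζ|²) > 0`, which sum to `1`;
so `p(ζ)` is a convex combination of the values `p(w_i)`.
-/

theorem Polynomial.nodup_roots_of_eval_derivative_ne_zero {R : Type*} [CommRing R] [IsDomain R]
    {p : R[X]} (hp : p ≠ 0) (h : ∀ x, p.IsRoot x → (derivative p).eval x ≠ 0) :
    p.roots.Nodup := by
  classical
  refine Multiset.nodup_iff_count_le_one.mpr fun x => ?_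
  rw [count_roots, ← not_lt, one_lt_rootMultiplicity_iff_isRoot hp]
  exact fun ⟨hx, hx'⟩ => h x hx hx'

theorem Polynomial.Splits.nodal_roots_toFinset {F : Type*} [Field F] [DecidableEq F] {Q : F[X]}
    (hQ : Q.Splits) (hm : Q.Monic) (hnd : Q.roots.Nodup) :
    Lagrange.nodal Q.roots.toFinset id = Q := by
  rw [Lagrange.nodal_eq, prod_eq_multiset_prod, Multiset.toFinset_val, hnd.dedup]
  exact (hQ.eq_prod_roots_of_monic hm).symm

theorem Lagrange.eval_basis_eq_div {F : Type*} [Field F] [DecidableEq F] {s : Finset F} {x ζ : F}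
    (hx : x ∈ s) (hζ : ζ ≠ x) :
    (Lagrange.basis s id x).eval ζ =
      (nodal s id).eval ζ / ((ζ - x) * (derivative (nodal s id)).eval x) := by
  rw [eval_basis_not_at_node hx hζ, nodalWeight_eq_eval_derivative_nodal hx, div_eq_mul_inv,
    mul_inv, id, mul_comm (ζ - x)⁻¹]

theorem exists_norm_eval_le_of_eval_basis_nonneg {K : Type*} [RCLike K] [DecidableEq K]
    {s : Finset K} {ζ : K} (hs : s.Nonempty) (hc : ∀ x ∈ s, 0 ≤ (Lagrange.basis s id x).eval ζ)
    {p : K[X]} (hp : p.degree < #s) :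
    ∃ x ∈ s, ‖p.eval ζ‖ ≤ ‖p.eval x‖ := by
  set c : K → K := fun x => (Lagrange.basis s id x).eval ζ
  have hinj : Set.InjOn id (s : Set K) := Function.injective_id.injOn
  have hsum : ∑ x ∈ s, ‖c x‖ = 1 := by
    have hc1 : ∑ x ∈ s, c x = 1 := by
      simpa [c, eval_finsetSum] using congrArg (eval ζ) (Lagrange.sum_basis hinj hs)
    exact_mod_cast (sum_congr rfl fun x hx => RCLike.norm_of_nonneg' (hc x hx)).trans hc1
  have hp_eq : p.eval ζ = ∑ x ∈ s, c x * p.eval x := by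
    conv_lhs => rw [Lagrange.eq_interpolate hinj hp]
    simp [Lagrange.interpolate_apply, eval_finsetSum, c, mul_comm]
  obtain ⟨x₀, hx₀, hmax⟩ := s.exists_max_image (fun x => ‖p.eval x‖) hs
  refine ⟨x₀, hx₀, ?_⟩
  calc ‖p.eval ζ‖ ≤ ∑ x ∈ s, ‖c x‖ * ‖p.eval x‖ := by
        rw [hp_eq]
        exact (norm_sum_le _ _).trans_eq (by simp only [norm_mul])
    _ ≤ ∑ x ∈ s, ‖c x‖ * ‖p.eval x₀‖ := by gcongr with x hx; exact hmax x hx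
    _ = ‖p.eval x₀‖ := by rw [← sum_mul, hsum, one_mul]

theorem Complex.sq_norm_one_sub_conj_mul (z w : ℂ) :
    ‖1 - conj z * w‖ ^ 2 = ‖w - z‖ ^ 2 + (1 - ‖w‖ ^ 2) * (1 - ‖z‖ ^ 2) := by
  simp only [Complex.sq_norm, Complex.normSq_apply, Complex.sub_re, Complex.sub_im,
    Complex.mul_re, Complex.mul_im, Complex.one_re, Complex.one_im, Complex.conj_re,
    Complex.conj_im]
  ring

noncomputable def nodePoly (ζ : ℂ) (N : ℕ) : ℂ[X] := X ^ N * (X - C ζ) - (1 - C (conj ζ) * X)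

section nodePoly

variable {ζ w x : ℂ} {N : ℕ}

@[simp] theorem eval_nodePoly : (nodePoly ζ N).eval w = w ^ N * (w - ζ) - (1 - conj ζ * w) := by
  simp [nodePoly]

theorem isRoot_nodePoly_iff : (nodePoly ζ N).IsRoot w ↔ w ^ N * (w - ζ) = 1 - conj ζ * w := by
  simp [sub_eq_zero]

theorem eval_derivative_nodePoly :
    (derivative (nodePoly ζ N)).eval w = N * w ^ (N - 1) * (w - ζ) + w ^ N + conj ζ := by
  simp [nodePoly, derivative_X_pow]

theorem natDegree_one_sub_C_mul_X_lt (hN : 0 < N) :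
    (1 - C (conj ζ) * X).natDegree < (X ^ N * (X - C ζ)).natDegree := by
  calc (1 - C (conj ζ) * X).natDegree ≤ 1 := by compute_degree
    _ < N + 1 := by omega
    _ = (X ^ N * (X - C ζ)).natDegree := by symm; compute_degree!

theorem natDegree_nodePoly (hN : 0 < N) : (nodePoly ζ N).natDegree = N + 1 := by
  rw [nodePoly, natDegree_sub_eq_left_of_natDegree_lt (natDegree_one_sub_C_mul_X_lt hN)]
  compute_degree!

theorem nodePoly_monic (hN : 0 < N) : (nodePoly ζ N).Monic :=
  ((monic_X_pow N).mul (monic_X_sub_C ζ)).sub_of_left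
    (degree_lt_degree (natDegree_one_sub_C_mul_X_lt hN))

theorem eval_nodePoly_self : (nodePoly ζ N).eval ζ = -(1 - ‖ζ‖ ^ 2 : ℝ) := by
  simp [Complex.conj_mul']

theorem not_isRoot_nodePoly_self (hζ : ‖ζ‖ < 1) : ¬(nodePoly ζ N).IsRoot ζ := by
  rw [IsRoot, eval_nodePoly_self, neg_eq_zero, Complex.ofReal_eq_zero]
  nlinarith [norm_nonneg ζ]

theorem norm_eq_one_of_isRoot_nodePoly (hζ : ‖ζ‖ < 1) (hw : (nodePoly ζ N).IsRoot w) :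
    ‖w‖ = 1 := by
  have hroot := isRoot_nodePoly_iff.mp hw
  have key : (‖w‖ ^ 2) ^ N * ‖w - ζ‖ ^ 2 = ‖w - ζ‖ ^ 2 + (1 - ‖w‖ ^ 2) * (1 - ‖ζ‖ ^ 2) := by
    rw [← Complex.sq_norm_one_sub_conj_mul, ← hroot, norm_mul, norm_pow]
    ring
  have hζ' : 0 < 1 - ‖ζ‖ ^ 2 := by nlinarith [norm_nonneg ζ]
  rcases lt_trichotomy ‖w‖ 1 with h | h | h
  · have h1 : 0 < 1 - ‖w‖ ^ 2 := by nlinarith [norm_nonneg w]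
    have h2 : (‖w‖ ^ 2) ^ N ≤ 1 := pow_le_one₀ (by positivity) (by linarith)
    nlinarith [mul_nonneg (sub_nonneg.2 h2) (sq_nonneg ‖w - ζ‖), mul_pos h1 hζ']
  · exact h
  · have h1 : 0 < ‖w‖ ^ 2 - 1 := by nlinarith
    have h2 : 1 ≤ (‖w‖ ^ 2) ^ N := one_le_pow₀ (by linarith)
    nlinarith [mul_nonneg (sub_nonneg.2 h2) (sq_nonneg ‖w - ζ‖), mul_pos h1 hζ']

theorem sub_mul_eval_derivative_nodePoly (hζ : ‖ζ‖ < 1) (hw : (nodePoly ζ N).IsRoot w) :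
    (ζ - w) * (derivative (nodePoly ζ N)).eval w = -(N * ‖w - ζ‖ ^ 2 + (1 - ‖ζ‖ ^ 2) : ℝ) := by
  have hroot := isRoot_nodePoly_iff.mp hw
  have hunit : conj w * w = 1 := by
    rw [Complex.conj_mul', norm_eq_one_of_isRoot_nodePoly hζ hw]; simp
  have hpow : (N : ℂ) * w ^ (N - 1) * (w - ζ) = N * (conj w - conj ζ) := by
    rcases N with _ | k
    · simp
    · push_cast [Nat.add_sub_cancel]
      linear_combination (k + 1 : ℂ) * (conj w * hroot - (w ^ k * (w - ζ) + conj ζ) * hunit)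
  rw [eval_derivative_nodePoly]
  push_cast
  rw [← Complex.mul_conj', ← Complex.mul_conj', map_sub]
  linear_combination (ζ - w) * hpow - hroot

theorem eval_derivative_nodePoly_ne_zero (hζ : ‖ζ‖ < 1) (hw : (nodePoly ζ N).IsRoot w) :
    (derivative (nodePoly ζ N)).eval w ≠ 0 := by
  intro h
  have := sub_mul_eval_derivative_nodePoly hζ hw
  rw [h, mul_zero, eq_comm, neg_eq_zero, Complex.ofReal_eq_zero] at this
  nlinarith [norm_nonneg ζ, sq_nonneg ‖w - ζ‖, (Nat.cast_nonneg N : (0 : ℝ) ≤ N)]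

theorem nodup_roots_nodePoly (hζ : ‖ζ‖ < 1) (hN : 0 < N) : (nodePoly ζ N).roots.Nodup :=
  nodup_roots_of_eval_derivative_ne_zero (nodePoly_monic hN).ne_zero
    fun _ hw => eval_derivative_nodePoly_ne_zero hζ hw

theorem card_roots_toFinset_nodePoly [DecidableEq ℂ] (hζ : ‖ζ‖ < 1) (hN : 0 < N) :
    #(nodePoly ζ N).roots.toFinset = N + 1 := by
  rw [Multiset.toFinset_card_of_nodup (nodup_roots_nodePoly hζ hN),
    ← (IsAlgClosed.splits _).natDegree_eq_card_roots, natDegree_nodePoly hN]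

theorem eval_basis_roots_nodePoly [DecidableEq ℂ] (hζ : ‖ζ‖ < 1) (hN : 0 < N)
    (hx : x ∈ (nodePoly ζ N).roots.toFinset) :
    (Lagrange.basis (nodePoly ζ N).roots.toFinset id x).eval ζ =
      ((1 - ‖ζ‖ ^ 2) / (N * ‖x - ζ‖ ^ 2 + (1 - ‖ζ‖ ^ 2)) : ℝ) := by
  have hroot : (nodePoly ζ N).IsRoot x := isRoot_of_mem_roots (Multiset.mem_toFinset.mp hx)
  have hζx : ζ ≠ x := by
    rintro rfl
    exact not_isRoot_nodePoly_self hζ hroot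
  rw [Lagrange.eval_basis_eq_div hx hζx,
    (IsAlgClosed.splits _).nodal_roots_toFinset (nodePoly_monic hN) (nodup_roots_nodePoly hζ hN),
    sub_mul_eval_derivative_nodePoly hζ hroot, eval_nodePoly_self]
  push_cast
  field_simp

end nodePoly

/-- For every `ζ` in the open unit disc and every `N ≥ 1` there are `N+1` points
`w₀, …, w_N` on the unit circle such that `|p(ζ)| ≤ max_i |p(w_i)|` for every polynomial
`p` of degree at most `N`. -/
theorem scalar_von_neumann_points
    (ζ : ℂ) (hζ : ‖ζ‖ < 1) (N : ℕ) (hN : 0 < N) :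
    ∃ w : Fin (N + 1) → ℂ,
      (∀ i, ‖w i‖ = 1) ∧
      ∀ p : Polynomial ℂ, p.natDegree ≤ N →
        ∃ i, ‖p.eval ζ‖ ≤ ‖p.eval (w i)‖ := by
  classical
  set s := (nodePoly ζ N).roots.toFinset
  have hcard : #s = N + 1 := card_roots_toFinset_nodePoly hζ hN
  have hweights : ∀ x ∈ s, 0 ≤ (Lagrange.basis s id x).eval ζ := fun x hx => by
    rw [eval_basis_roots_nodePoly hζ hN hx, Complex.zero_le_real]
    have : ‖ζ‖ ^ 2 < 1 := by nlinarith [norm_nonneg ζ]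
    positivity
  let e : Fin (N + 1) ≃ s := (s.equivFin.trans (finCongr hcard)).symm
  refine ⟨fun i => e i, fun i => norm_eq_one_of_isRoot_nodePoly hζ
    (isRoot_of_mem_roots (Multiset.mem_toFinset.mp (e i).2)), fun p hp => ?_⟩
  have hdeg : p.degree < #s := by
    rw [hcard]; exact degree_le_natDegree.trans_lt (by exact_mod_cast Nat.lt_succ_of_le hp)
  obtain ⟨x, hx, hle⟩ := exists_norm_eval_le_of_eval_basis_nonneg (card_pos.mp (by omega))
    hweights hdeg
  exact ⟨e.symm ⟨x, hx⟩, by simpa using hle⟩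
end

section
/- Let φ be a completely positive map on B(H) = M_n(ℂ) of Choi index d > 1 (the minimal number of Kraus operators in a representation φ(T) = ∑_{i=1}^d A_i T A_i* is greater than 1). Suppose K ⊇ H and α is a *-endomorphism of B(K) such that φ(T) = P_H α(T) P_H for all T ∈ B(H). Then K is infinite-dimensional. -/
/-!
In finite dimensions a (unital) ∗-endomorphism `α` of `B(K)` is injective, since the two-sided
ideal generated by a nonzero operator contains every rank-one operator and hence `1`; so it is
bijective. Then `α` maps the projection onto a unit vector `ξ` to a projection `p` with
`p B(K) p = ℂ p`, i.e. to the projection onto a unit vector `η`, and `V x := α(|x⟩⟨ξ|) η`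
implements `α` as `α(T) = V T V*`. Compressing to `H`, `φ(T) = A T A*` with `A = W* V W`,
a Kraus representation with a single operator.
-/

open ContinuousLinearMap InnerProductSpace

section RankOne

variable {𝕜 E F : Type*} [RCLike 𝕜] [NormedAddCommGroup E] [InnerProductSpace 𝕜 E]
  [NormedAddCommGroup F] [InnerProductSpace 𝕜 F]

theorem InnerProductSpace.rankOne_comp_comp_rankOne (x z u y : E) (X : E →L[𝕜] E) :
    rankOne 𝕜 x z ∘L X ∘L rankOne 𝕜 u y = inner 𝕜 z (X u) • rankOne 𝕜 x y := by
  rw [comp_rankOne, rankOne_comp_rankOne]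

theorem OrthonormalBasis.sum_rankOne_apply_eq {ι : Type*} [Fintype ι]
    (b : OrthonormalBasis ι 𝕜 E) (T : E →L[𝕜] F) : ∑ i, rankOne 𝕜 (T (b i)) (b i) = T := by
  simp_rw [← comp_rankOne, ← comp_finsetSum, b.sum_rankOne_eq_id, comp_id]

theorem InnerProductSpace.addMonoidHom_ext_rankOne [FiniteDimensional 𝕜 E] {M : Type*}
    [AddCommMonoid M] {f g : (E →L[𝕜] F) →+ M}
    (h : ∀ (x : F) (y : E), f (rankOne 𝕜 x y) = g (rankOne 𝕜 x y)) : f = g := by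
  ext T
  rw [← (stdOrthonormalBasis 𝕜 E).sum_rankOne_apply_eq T, map_sum, map_sum]
  simp only [h]

end RankOne

section Endomorphism

variable {𝕜 E : Type*} [RCLike 𝕜] [NormedAddCommGroup E] [InnerProductSpace 𝕜 E]

theorem ContinuousLinearMap.algHom_injective [FiniteDimensional 𝕜 E] {A : Type*} [Ring A]
    [Algebra 𝕜 A] [Nontrivial A] (f : (E →L[𝕜] E) →ₐ[𝕜] A) : Function.Injective f := by
  refine (injective_iff_map_eq_zero f).mpr fun X hX => ?_
  by_contra hX0
  obtain ⟨u, hu⟩ : ∃ u, X u ≠ 0 := by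
    by_contra! h
    exact hX0 (ContinuousLinearMap.ext h)
  have hXu : inner 𝕜 (X u) (X u) ≠ 0 := inner_self_ne_zero.mpr hu
  have hf_rankOne : ∀ x y : E, f (rankOne 𝕜 x y) = 0 := fun x y => by
    have hsandwich := congrArg f (rankOne_comp_comp_rankOne x (X u) u y X)
    rw [← mul_def, ← mul_def, map_mul, map_mul, hX, map_smul] at hsandwich
    simpa [hXu, hu] using hsandwich.symm
  have hf_one : f 1 = 0 := by
    rw [← (stdOrthonormalBasis 𝕜 E).sum_rankOne_apply_eq 1, map_sum]
    simp [hf_rankOne]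
  exact one_ne_zero (f.map_one ▸ hf_one)

theorem IsStarProjection.exists_eq_rankOne [CompleteSpace E] {p : E →L[𝕜] E}
    (hp : IsStarProjection p) (hp0 : p ≠ 0) (hcorner : ∀ X, ∃ c : 𝕜, p ∘L X ∘L p = c • p) :
    ∃ η : E, ‖η‖ = 1 ∧ p = rankOne 𝕜 η η := by
  obtain ⟨z, hz⟩ : ∃ z, p z ≠ 0 := by
    by_contra! h
    exact hp0 (ContinuousLinearMap.ext h)
  set η : E := (‖p z‖⁻¹ : 𝕜) • p z
  have hη : ‖η‖ = 1 := norm_smul_inv_norm hz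
  have hη0 : η ≠ 0 := norm_ne_zero_iff.mp (by simp [hη])
  have hpη : p η = η := by
    simp only [η, map_smul, ← comp_apply, ← mul_def, hp.isIdempotentElem.eq]
  obtain ⟨c, hc⟩ := hcorner (rankOne 𝕜 η η)
  rw [rankOne_comp, comp_rankOne, ← star_eq_adjoint, hp.isSelfAdjoint.star_eq, hpη] at hc
  have hc1 : c = 1 := by
    have hcη : η = c • η := by
      simpa [inner_self_eq_norm_sq_to_K, hη, hpη] using congrArg (· η) hc
    exact smul_left_injective 𝕜 hη0 (hcη.symm.trans (one_smul 𝕜 η).symm)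
  exact ⟨η, hη, by rw [hc, hc1, one_smul]⟩

theorem StarAlgHom.exists_map_rankOne_self_eq [CompleteSpace E]
    (α : (E →L[𝕜] E) →⋆ₐ[𝕜] (E →L[𝕜] E)) (hα : Function.Bijective α) {ξ : E} (hξ : ‖ξ‖ = 1) :
    ∃ η : E, ‖η‖ = 1 ∧ α (rankOne 𝕜 ξ ξ) = rankOne 𝕜 η η := by
  refine ((isStarProjection_rankOne_self hξ).map α).exists_eq_rankOne ?_ fun X => ?_
  · have hξ0 : ξ ≠ 0 := norm_ne_zero_iff.mp (by simp [hξ])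
    rw [← map_zero α, hα.injective.ne_iff]
    exact rankOne_ne_zero hξ0 hξ0
  · obtain ⟨Y, rfl⟩ := hα.surjective X
    refine ⟨inner 𝕜 ξ (Y ξ), ?_⟩
    rw [← map_smul, ← rankOne_comp_comp_rankOne]
    simp only [← mul_def, map_mul]

theorem StarAlgHom.exists_map_rankOne_eq [CompleteSpace E] [FiniteDimensional 𝕜 E]
    (α : (E →L[𝕜] E) →⋆ₐ[𝕜] (E →L[𝕜] E)) {ξ η : E} (hξ : ‖ξ‖ = 1) (hη : ‖η‖ = 1)
    (hp : α (rankOne 𝕜 ξ ξ) = rankOne 𝕜 η η) :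
    ∃ V : E →L[𝕜] E, ∀ x y, α (rankOne 𝕜 x y) = rankOne 𝕜 (V x) (V y) := by
  have hξξ : inner 𝕜 ξ ξ = (1 : 𝕜) := by simp [inner_self_eq_norm_sq_to_K, hξ]
  have hηη : inner 𝕜 η η = (1 : 𝕜) := by simp [inner_self_eq_norm_sq_to_K, hη]
  have hαcomp : ∀ X Y, α (X ∘L Y) = α X ∘L α Y := fun X Y => map_mul α X Y
  have hαadj : ∀ X, α (adjoint X) = adjoint (α X) := fun X => by
    simp only [← star_eq_adjoint, map_star]
  let V : E →L[𝕜] E := LinearMap.toContinuousLinearMap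
    { toFun := fun x => α (rankOne 𝕜 x ξ) η
      map_add' := fun x y => by simp
      map_smul' := fun c x => by simp }
  have hV : ∀ x, α (rankOne 𝕜 x ξ) = rankOne 𝕜 (V x) η := fun x => by
    calc α (rankOne 𝕜 x ξ) = α (rankOne 𝕜 x ξ ∘L rankOne 𝕜 ξ ξ) := by
          rw [rankOne_comp_rankOne, hξξ, one_smul]
      _ = rankOne 𝕜 (V x) η := by rw [hαcomp, hp, comp_rankOne]; rfl
  refine ⟨V, fun x y => ?_⟩
  calc α (rankOne 𝕜 x y) = α (rankOne 𝕜 x ξ ∘L adjoint (rankOne 𝕜 y ξ)) := by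
        rw [adjoint_rankOne, rankOne_comp_rankOne, hξξ, one_smul]
    _ = rankOne 𝕜 (V x) (V y) := by
        rw [hαcomp, hαadj, hV, hV, adjoint_rankOne, rankOne_comp_rankOne, hηη, one_smul]

theorem StarAlgHom.exists_eq_comp_comp_adjoint [CompleteSpace E] [FiniteDimensional 𝕜 E]
    (α : (E →L[𝕜] E) →⋆ₐ[𝕜] (E →L[𝕜] E)) :
    ∃ V : E →L[𝕜] E, ∀ X, α X = V ∘L X ∘L adjoint V := by
  cases subsingleton_or_nontrivial E
  · exact ⟨0, fun X => Subsingleton.elim _ _⟩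
  have hinj : Function.Injective α := ContinuousLinearMap.algHom_injective α.toAlgHom
  have hbij : Function.Bijective α :=
    ⟨hinj, LinearMap.injective_iff_surjective (f := α.toAlgHom.toLinearMap) |>.mp hinj⟩
  obtain ⟨x₀, hx₀⟩ := exists_ne (0 : E)
  have hξ : ‖(‖x₀‖⁻¹ : 𝕜) • x₀‖ = 1 := norm_smul_inv_norm hx₀
  obtain ⟨η, hη, hp⟩ := α.exists_map_rankOne_self_eq hbij hξ
  obtain ⟨V, hV⟩ := α.exists_map_rankOne_eq hξ hη hp
  refine ⟨V, fun X => ?_⟩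
  suffices (α : (E →L[𝕜] E) →+ (E →L[𝕜] E)) =
      (AddMonoidHom.mulLeft V).comp (AddMonoidHom.mulRight (adjoint V)) from
    DFunLike.congr_fun this X
  refine addMonoidHom_ext_rankOne fun x y => ?_
  simp only [AddMonoidHom.coe_coe, AddMonoidHom.coe_comp, Function.comp_apply,
    AddMonoidHom.coe_mulLeft, AddMonoidHom.coe_mulRight, mul_def]
  rw [hV, rankOne_comp, adjoint_adjoint, comp_rankOne]

end Endomorphism

theorem cp_endomorphic_dilation_infinite_dimensional_general
    (H : Type) [NormedAddCommGroup H] [InnerProductSpace ℂ H] [FiniteDimensional ℂ H]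
    (φ : (H →L[ℂ] H) →ₗ[ℂ] (H →L[ℂ] H))
    (hIndex : ¬ ∃ A : H →L[ℂ] H, ∀ T : H →L[ℂ] H, φ T = A ∘L T ∘L adjoint A)
    (K : Type) [NormedAddCommGroup K] [InnerProductSpace ℂ K] [CompleteSpace K]
    (W : H →ₗᵢ[ℂ] K)
    (α : (K →L[ℂ] K) →⋆ₐ[ℂ] (K →L[ℂ] K))
    (hdil : ∀ T : H →L[ℂ] H,
      φ T = adjoint W.toContinuousLinearMap ∘L
        α (W.toContinuousLinearMap ∘L T ∘L adjoint W.toContinuousLinearMap) ∘L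
        W.toContinuousLinearMap) :
    ¬ FiniteDimensional ℂ K := by
  intro hK
  obtain ⟨V, hV⟩ := α.exists_eq_comp_comp_adjoint
  refine hIndex ⟨adjoint W.toContinuousLinearMap ∘L V ∘L W.toContinuousLinearMap, fun T => ?_⟩
  simp only [hdil, hV, adjoint_comp, adjoint_adjoint, comp_assoc]

/-- **No finite-dimensional ∗-endomorphic dilations.** Let `φ` be a completely positive
map on `B(H)` (given, via Choi's theorem, by Kraus operators) whose index is greater than
`1` (it admits no single-Kraus-operator representation). If `K ⊇ H` and `α` is a
∗-endomorphism of `B(K)` with `φ(T) = P_H α(T) P_H` for all `T ∈ B(H)`, then `K` is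
infinite-dimensional. -/
theorem cp_endomorphic_dilation_infinite_dimensional
    (H : Type) [NormedAddCommGroup H] [InnerProductSpace ℂ H] [FiniteDimensional ℂ H]
    (φ : (H →L[ℂ] H) →ₗ[ℂ] (H →L[ℂ] H))
    (hCP : ∃ (d : ℕ) (A : Fin d → (H →L[ℂ] H)),
      ∀ T : H →L[ℂ] H, φ T = ∑ i, A i ∘L T ∘L adjoint (A i))
    (hIndex : ¬ ∃ A : H →L[ℂ] H, ∀ T : H →L[ℂ] H, φ T = A ∘L T ∘L adjoint A)
    (K : Type) [NormedAddCommGroup K] [InnerProductSpace ℂ K] [CompleteSpace K]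
    (W : H →ₗᵢ[ℂ] K)
    (α : (K →L[ℂ] K) →⋆ₐ[ℂ] (K →L[ℂ] K))
    (hdil : ∀ T : H →L[ℂ] H,
      φ T = adjoint W.toContinuousLinearMap ∘L
        α (W.toContinuousLinearMap ∘L T ∘L adjoint W.toContinuousLinearMap) ∘L
        W.toContinuousLinearMap) :
    ¬ FiniteDimensional ℂ K :=
  cp_endomorphic_dilation_infinite_dimensional_general H φ hIndex K W α hdil
end
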